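/- arXiv:2507.00920 — 5 statements merged into one kernel-verified Lean document; each statement's English description precedes it below -/
import Mathlib

section
/- Let q_i, q_{i+1}, a be real numbers and let ε ≥ 0. Consider the expected quantization distortion D(p) = p·(q_i − a)² + (1 − p)·(q_{i+1} − a)² over probabilities p satisfying 0 ≤ p ≤ 1 and the differential-privacy constraint e^{−ε}·(1 − p) ≤ p ≤ e^{ε}·(1 − p). Define p* = e^{ε}/(e^{ε}+1) if |q_i − a| ≤ |q_{i+1} − a| and p* = 1/(e^{ε}+1) otherwise. Then p* is feasible and for every feasible p one has D(p*) ≤ D(p); that is, p* minimizes the expected distortion subject to the ε-DP constraint. -/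
/-!
The distortion `p (q_i - a)² + (1 - p) (q_{i+1} - a)²` is affine in `p`, and with `t = e^ε` the
DP constraint says exactly that `p ∈ [1/(t+1), t/(t+1)]`. An affine function is minimized on an
interval at the endpoint against its slope, i.e. by giving the larger weight to the closer level.
-/

open Real Set

lemma inv_mul_one_sub_le_iff {t p : ℝ} (ht : 0 < t) :
    t⁻¹ * (1 - p) ≤ p ↔ 1 / (t + 1) ≤ p := by
  rw [inv_mul_le_iff₀ ht, div_le_iff₀ (by linarith)]
  constructor <;> intro h <;> linarith

lemma le_mul_one_sub_iff {t p : ℝ} (ht : 0 < t + 1) :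
    p ≤ t * (1 - p) ↔ p ≤ t / (t + 1) := by
  rw [le_div_iff₀ ht]
  constructor <;> intro h <;> linarith

lemma dp_constraint_iff_mem_Icc {t p : ℝ} (ht : 0 < t) :
    (t⁻¹ * (1 - p) ≤ p ∧ p ≤ t * (1 - p)) ↔ p ∈ Icc (1 / (t + 1)) (t / (t + 1)) :=
  and_congr (inv_mul_one_sub_le_iff ht) (le_mul_one_sub_iff (by linarith))

lemma one_div_add_one_le_div_add_one {t : ℝ} (ht : 1 ≤ t) : 1 / (t + 1) ≤ t / (t + 1) :=
  div_le_div_of_nonneg_right ht (by linarith)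

lemma div_add_one_le_one {t : ℝ} (ht : 0 ≤ t) : t / (t + 1) ≤ 1 :=
  div_le_one_of_le₀ (by linarith) (by linarith)

lemma mix_le_mix_of_le_of_le {A B p u : ℝ} (hAB : A ≤ B) (hpu : p ≤ u) :
    u * A + (1 - u) * B ≤ p * A + (1 - p) * B := by
  linear_combination mul_nonneg (sub_nonneg.2 hpu) (sub_nonneg.2 hAB)

lemma mix_le_mix_of_ge_of_le {A B l p : ℝ} (hBA : B ≤ A) (hlp : l ≤ p) :
    l * A + (1 - l) * B ≤ p * A + (1 - p) * B := by
  linear_combination mul_nonneg (sub_nonneg.2 hlp) (sub_nonneg.2 hBA)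

/-- The probability `p* = e^ε/(e^ε+1)` (if `a` is closer to `q_i`) or `1/(e^ε+1)` (otherwise)
is feasible for the ε-DP constraint and minimizes the expected quantization distortion
`D(p) = p·(q_i − a)² + (1 − p)·(q_{i+1} − a)²` over all feasible probabilities `p`. -/
theorem optimal_dp_quantization_probability (qi qi1 a ε : ℝ) (hε : 0 ≤ ε) :
    letI D : ℝ → ℝ := fun p => p * (qi - a) ^ 2 + (1 - p) * (qi1 - a) ^ 2
    letI pstar : ℝ :=
      if |qi - a| ≤ |qi1 - a| then Real.exp ε / (Real.exp ε + 1) else 1 / (Real.exp ε + 1)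
    (0 ≤ pstar ∧ pstar ≤ 1 ∧
      Real.exp (-ε) * (1 - pstar) ≤ pstar ∧ pstar ≤ Real.exp ε * (1 - pstar)) ∧
    ∀ p : ℝ, 0 ≤ p → p ≤ 1 →
      Real.exp (-ε) * (1 - p) ≤ p → p ≤ Real.exp ε * (1 - p) →
      D pstar ≤ D p := by
  have hpos : 0 < exp ε := exp_pos ε
  have hIcc : 1 / (exp ε + 1) ≤ exp ε / (exp ε + 1) :=
    one_div_add_one_le_div_add_one (one_le_exp hε)
  have hupper : exp ε / (exp ε + 1) ≤ 1 := div_add_one_le_one hpos.le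
  have hfeasible {p : ℝ} := dp_constraint_iff_mem_Icc (p := p) hpos
  simp only [exp_neg]
  split_ifs with hcloser
  · exact ⟨⟨by positivity, hupper, hfeasible.2 (right_mem_Icc.2 hIcc)⟩, fun p _ _ hlo hhi =>
      mix_le_mix_of_le_of_le (sq_le_sq.2 hcloser) (hfeasible.1 ⟨hlo, hhi⟩).2⟩
  · exact ⟨⟨by positivity, hIcc.trans hupper, hfeasible.2 (left_mem_Icc.2 hIcc)⟩,
      fun p _ _ hlo hhi =>
        mix_le_mix_of_ge_of_le (sq_le_sq.2 (le_of_not_ge hcloser)) (hfeasible.1 ⟨hlo, hhi⟩).1⟩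
end

section
/- Let q_i, q_{i+1} be real numbers, ε ≥ 0, and for each real input a define p*(a) = e^{ε}/(e^{ε}+1) if |q_i − a| ≤ |q_{i+1} − a| and p*(a) = 1/(e^{ε}+1) otherwise. Then for all inputs a and a', and for every subset S of the two-element outcome set {q_i, q_{i+1}}, the output probability satisfies Pr[Q(a) ∈ S] ≤ e^{ε} · Pr[Q(a') ∈ S], where Pr[Q(a) = q_i] = p*(a) and Pr[Q(a) = q_{i+1}] = 1 − p*(a). In particular p*(a) ≤ e^{ε}·p*(a') and 1 − p*(a) ≤ e^{ε}·(1 − p*(a')). Hence the proposed stochastic quantizer satisfies ε-differential privacy on each coordinate. -/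
open Real Classical

/-- The proposed stochastic quantizer (outputting the lower level `q_i`, encoded `true`,
with probability `p*(a)`, and the upper level `q_{i+1}`, encoded `false`, with probability
`1 − p*(a)`) satisfies ε-differential privacy: for any two inputs `a, a'` and any subset `S`
of the two-element outcome set, `Pr[Q(a) ∈ S] ≤ e^ε · Pr[Q(a') ∈ S]`; in particular
`p*(a) ≤ e^ε·p*(a')` and `1 − p*(a) ≤ e^ε·(1 − p*(a'))`. -/
theorem dp_quantizer_is_differentially_private (qi qi1 ε : ℝ) (hε : 0 ≤ ε) :
    letI pstar : ℝ → ℝ := fun a =>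
      if |qi - a| ≤ |qi1 - a| then Real.exp ε / (Real.exp ε + 1) else 1 / (Real.exp ε + 1)
    letI Pr : ℝ → Set Bool → ℝ := fun a S =>
      (if true ∈ S then pstar a else 0) + (if false ∈ S then 1 - pstar a else 0)
    ∀ a a' : ℝ,
      (∀ S : Set Bool, Pr a S ≤ Real.exp ε * Pr a' S) ∧
      pstar a ≤ Real.exp ε * pstar a' ∧
      1 - pstar a ≤ Real.exp ε * (1 - pstar a') := by
  intro a a'
  beta_reduce
  have hE : (1:ℝ) ≤ Real.exp ε := Real.one_le_exp hε
  have hEpos : (0:ℝ) < Real.exp ε + 1 := by linarith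
  by_cases h : |qi - a| ≤ |qi1 - a| <;> by_cases h' : |qi - a'| ≤ |qi1 - a'| <;>
    simp only [h, h', if_true, if_false, if_pos, if_neg, not_false_iff] <;>
    refine ⟨fun S => ?_, ?_, ?_⟩ <;>
    (first | split_ifs | skip) <;>
    (try field_simp) <;>
    (first
      | nlinarith [Real.exp_pos ε]
      | (rw [div_le_div_iff₀ hEpos hEpos]; nlinarith [Real.exp_pos ε, mul_nonneg (mul_nonneg (sub_nonneg.2 hE) (by positivity : (0:ℝ) ≤ 1 + Real.exp ε)) hEpos.le])
      | (rw [div_le_iff₀ hEpos]; nlinarith [Real.exp_pos ε])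
      | (rw [le_div_iff₀ hEpos]; nlinarith [Real.exp_pos ε]))
end

section
/- Let q_i ≤ a ≤ q_{i+1} be real numbers and let ε ≥ 0. Then the minimal expected distortion of the ε-differentially-private stochastic quantizer satisfies (e^{ε}·min{(q_i − a)², (q_{i+1} − a)²} + max{(q_i − a)², (q_{i+1} − a)²}) / (e^{ε} + 1) ≤ (q_{i+1} − q_i)². In particular, for a uniform grid of 2^b levels on an interval of width 2C, the per-coordinate distortion is at most 4C²/(2^b − 1)². -/
open Real

/-- For `q_i ≤ a ≤ q_{i+1}` and `ε ≥ 0`, the minimal expected distortion of the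
ε-differentially-private stochastic quantizer is at most the squared level spacing
`(q_{i+1} − q_i)²`; in particular, for a uniform grid of `2^b` levels spanning an interval
of width `2C` (adjacent spacing `2C/(2^b − 1)`), the per-coordinate distortion is at most
`4C²/(2^b − 1)²`. -/
theorem dp_distortion_le_spacing_sq (qi qi1 a ε : ℝ)
    (h1 : qi ≤ a) (h2 : a ≤ qi1) (hε : 0 ≤ ε) :
    (Real.exp ε * min ((qi - a) ^ 2) ((qi1 - a) ^ 2) +
        max ((qi - a) ^ 2) ((qi1 - a) ^ 2)) / (Real.exp ε + 1) ≤ (qi1 - qi) ^ 2 ∧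
    ∀ (b : ℕ) (C : ℝ), qi1 - qi = 2 * C / (2 ^ b - 1) →
      (Real.exp ε * min ((qi - a) ^ 2) ((qi1 - a) ^ 2) +
          max ((qi - a) ^ 2) ((qi1 - a) ^ 2)) / (Real.exp ε + 1) ≤
        4 * C ^ 2 / (2 ^ b - 1) ^ 2 := by
  have hS : (0:ℝ) ≤ qi1 - qi := by linarith
  have hm1 : (qi - a) ^ 2 ≤ (qi1 - qi) ^ 2 := by
    apply sq_le_sq'
    · linarith
    · linarith
  have hm2 : (qi1 - a) ^ 2 ≤ (qi1 - qi) ^ 2 := by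
    apply sq_le_sq'
    · linarith
    · linarith
  have hmin : min ((qi - a) ^ 2) ((qi1 - a) ^ 2) ≤ (qi1 - qi) ^ 2 :=
    le_trans (min_le_left _ _) hm1
  have hmax : max ((qi - a) ^ 2) ((qi1 - a) ^ 2) ≤ (qi1 - qi) ^ 2 :=
    max_le hm1 hm2
  have hexp : (0:ℝ) < Real.exp ε := Real.exp_pos ε
  have hden : (0:ℝ) < Real.exp ε + 1 := by linarith
  have hmain : (Real.exp ε * min ((qi - a) ^ 2) ((qi1 - a) ^ 2) +
      max ((qi - a) ^ 2) ((qi1 - a) ^ 2)) / (Real.exp ε + 1) ≤ (qi1 - qi) ^ 2 := by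
    rw [div_le_iff₀ hden]
    nlinarith [hexp.le, hmin, hmax]
  refine ⟨hmain, ?_⟩
  intro b C hC
  have : (qi1 - qi) ^ 2 = 4 * C ^ 2 / (2 ^ b - 1) ^ 2 := by
    rw [hC, div_pow]; ring_nf
  linarith [hmain]
end

section
/- Let L be a positive integer and let μ, η > 0 and K, Λ, N, γ ≥ 0 be real numbers satisfying μη ≤ 1, L·μ·η ≤ 1, and 2η·(L²μ² + K + 4ΛNL²γ²) ≤ Lμ. Then (1 + Kη²)·(1 − μη)^L + 4η²·Λ·N·L²·γ² ≤ 1 − (L·μ·η)/2. -/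
lemma pow_one_sub_le (x : ℝ) (hx : 0 ≤ x) (hx1 : x ≤ 1) :
    ∀ n : ℕ, (1 - x) ^ n ≤ 1 - n * x + (n : ℝ) ^ 2 * x ^ 2 := by
  intro n
  induction n with
  | zero => simp
  | succ n ih =>
    have h0 : (0:ℝ) ≤ 1 - x := by linarith
    have hpos : (0:ℝ) ≤ 1 - n * x + (n : ℝ) ^ 2 * x ^ 2 := by nlinarith [sq_nonneg ((n:ℝ)*x - 1)]
    have : (1 - x) ^ (n + 1) = (1 - x) ^ n * (1 - x) := pow_succ _ _
    rw [this]
    have hle : (1 - x) ^ n * (1 - x) ≤ (1 - n * x + (n : ℝ) ^ 2 * x ^ 2) * (1 - x) :=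
      mul_le_mul_of_nonneg_right ih h0
    push_cast
    nlinarith [sq_nonneg ((n:ℝ)*x), mul_nonneg (mul_nonneg (sq_nonneg (n:ℝ)) (sq_nonneg x)) hx,
      mul_nonneg (Nat.cast_nonneg n : (0:ℝ) ≤ n) hx]

/-- Bound on the contraction coefficient `m_{1,t}`: if `μη ≤ 1`, `Lμη ≤ 1`, and
`2η(L²μ² + K + 4ΛNL²γ²) ≤ Lμ`, then
`(1 + Kη²)(1 − μη)^L + 4η²ΛNL²γ² ≤ 1 − Lμη/2`. -/
theorem contraction_coefficient_bound (L : ℕ) (hL : 0 < L)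
    (μ η K Λ N γ : ℝ) (hμ : 0 < μ) (hη : 0 < η)
    (hK : 0 ≤ K) (hΛ : 0 ≤ Λ) (hN : 0 ≤ N) (hγ : 0 ≤ γ)
    (h1 : μ * η ≤ 1) (h2 : (L : ℝ) * μ * η ≤ 1)
    (h3 : 2 * η * ((L : ℝ) ^ 2 * μ ^ 2 + K + 4 * Λ * N * (L : ℝ) ^ 2 * γ ^ 2) ≤ (L : ℝ) * μ) :
    (1 + K * η ^ 2) * (1 - μ * η) ^ L + 4 * η ^ 2 * Λ * N * (L : ℝ) ^ 2 * γ ^ 2 ≤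
      1 - (L : ℝ) * μ * η / 2 := by
  have hx : 0 ≤ μ * η := le_of_lt (mul_pos hμ hη)
  have hpow := pow_one_sub_le (μ * η) hx h1 L
  have hLx : 0 ≤ (L : ℝ) * (μ * η) := mul_nonneg (Nat.cast_nonneg L) hx
  have hLx1 : (L : ℝ) * (μ * η) ≤ 1 := by nlinarith
  have hfac : 1 - (L : ℝ) * (μ * η) + (L : ℝ) ^ 2 * (μ * η) ^ 2 ≤ 1 := by nlinarith [mul_nonneg hLx (sub_nonneg.2 hLx1)]
  have h1K : (0:ℝ) ≤ 1 + K * η ^ 2 := by positivity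
  have hmul : (1 + K * η ^ 2) * (1 - μ * η) ^ L ≤
      (1 + K * η ^ 2) * (1 - (L : ℝ) * (μ * η) + (L : ℝ) ^ 2 * (μ * η) ^ 2) :=
    mul_le_mul_of_nonneg_left hpow h1K
  have h3' : η ^ 2 * ((L : ℝ) ^ 2 * μ ^ 2 + K + 4 * Λ * N * (L : ℝ) ^ 2 * γ ^ 2) ≤
      (L : ℝ) * μ * η / 2 := by nlinarith
  nlinarith [mul_nonneg hK (sq_nonneg η),
    mul_nonneg (mul_nonneg hK (sq_nonneg η)) (sub_nonneg.2 hfac)]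
end

section
/- Let e : ℕ → ℝ be a sequence with e(t₀) ≥ 0 for some integer t₀ ≥ 4, and let k₁, k₂, Δ ≥ 0 be real constants. Suppose that for all t ≥ t₀, e(t+1) ≤ (1 − 4/t)·e(t) + k₁/t² + k₂/t⁴ + Δ. Then for all t ≥ t₀, e(t) ≤ (t₀/t)·e(t₀) + k₁/t + k₂/t³ + (t − 4)·Δ. -/
set_option maxHeartbeats 1000000


/-- Convergence rate of the per-round error recursion (Theorem 1): if for all `t ≥ t₀ ≥ 4`
the error satisfies `e(t+1) ≤ (1 − 4/t)·e(t) + k₁/t² + k₂/t⁴ + Δ`, then for all `t ≥ t₀`,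
`e(t) ≤ (t₀/t)·e(t₀) + k₁/t + k₂/t³ + (t − 4)·Δ`. -/
theorem fl_error_recursion_bound (e : ℕ → ℝ) (t₀ : ℕ) (ht₀ : 4 ≤ t₀) (he : 0 ≤ e t₀)
    (k₁ k₂ Δ : ℝ) (hk₁ : 0 ≤ k₁) (hk₂ : 0 ≤ k₂) (hΔ : 0 ≤ Δ)
    (hrec : ∀ t : ℕ, t₀ ≤ t →
      e (t + 1) ≤ (1 - 4 / (t : ℝ)) * e t + k₁ / (t : ℝ) ^ 2 + k₂ / (t : ℝ) ^ 4 + Δ) :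
    ∀ t : ℕ, t₀ ≤ t →
      e t ≤ ((t₀ : ℝ) / (t : ℝ)) * e t₀ + k₁ / (t : ℝ) + k₂ / (t : ℝ) ^ 3 +
        ((t : ℝ) - 4) * Δ := by
  have ht₀R : (4 : ℝ) ≤ (t₀ : ℝ) := by exact_mod_cast ht₀
  intro t ht
  induction t, ht using Nat.le_induction with
  | base =>
    have h0 : (0 : ℝ) < (t₀ : ℝ) := by linarith
    rw [div_self (ne_of_gt h0)]
    have h1 : 0 ≤ k₁ / (t₀ : ℝ) := by positivity
    have h2 : 0 ≤ k₂ / (t₀ : ℝ) ^ 3 := by positivity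
    have h3 : 0 ≤ ((t₀ : ℝ) - 4) * Δ := mul_nonneg (by linarith) hΔ
    linarith
  | succ t ht ih =>
    have hT : (4 : ℝ) ≤ (t : ℝ) := le_trans ht₀R (by exact_mod_cast ht)
    have hTpos : (0 : ℝ) < (t : ℝ) := by linarith
    have hT1 : (0 : ℝ) < (t : ℝ) + 1 := by linarith
    have ht0nn : (0 : ℝ) ≤ (t₀ : ℝ) := by linarith
    have hcoef : 0 ≤ 1 - 4 / (t : ℝ) := by
      rw [sub_nonneg, div_le_one hTpos]; exact hT
    have key := hrec t ht
    have hmul : (1 - 4 / (t : ℝ)) * e t ≤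
        (1 - 4 / (t : ℝ)) * (((t₀ : ℝ) / (t : ℝ)) * e t₀ + k₁ / (t : ℝ) + k₂ / (t : ℝ) ^ 3 + ((t : ℝ) - 4) * Δ) :=
      mul_le_mul_of_nonneg_left ih hcoef
    -- four componentwise bounds
    have h1 : (1 - 4 / (t : ℝ)) * (((t₀ : ℝ) / (t : ℝ)) * e t₀) ≤ (t₀ : ℝ) / ((t : ℝ) + 1) * e t₀ := by
      rw [← mul_assoc]
      apply mul_le_mul_of_nonneg_right _ he
      rw [show (1 - 4 / (t : ℝ)) = ((t : ℝ) - 4) / (t : ℝ) from by field_simp,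
        div_mul_div_comm, div_le_div_iff₀ (by positivity) hT1]
      nlinarith
    have h2 : (1 - 4 / (t : ℝ)) * (k₁ / (t : ℝ)) + k₁ / (t : ℝ) ^ 2 ≤ k₁ / ((t : ℝ) + 1) := by
      rw [show (1 - 4 / (t : ℝ)) * (k₁ / (t : ℝ)) + k₁ / (t : ℝ) ^ 2 = ((t : ℝ) - 3) * k₁ / (t : ℝ) ^ 2 by
        field_simp; ring]
      rw [div_le_div_iff₀ (by positivity) hT1]
      nlinarith
    have h3 : (1 - 4 / (t : ℝ)) * (k₂ / (t : ℝ) ^ 3) + k₂ / (t : ℝ) ^ 4 ≤ k₂ / ((t : ℝ) + 1) ^ 3 := by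
      rw [show (1 - 4 / (t : ℝ)) * (k₂ / (t : ℝ) ^ 3) + k₂ / (t : ℝ) ^ 4 = ((t : ℝ) - 3) * k₂ / (t : ℝ) ^ 4 by
        field_simp; ring]
      rw [div_le_div_iff₀ (by positivity) (by positivity)]
      nlinarith [mul_nonneg (mul_nonneg hk₂ (le_of_lt hTpos)) (le_of_lt hTpos),
        mul_nonneg hk₂ (le_of_lt hTpos), sq_nonneg (t : ℝ)]
    have h4 : (1 - 4 / (t : ℝ)) * (((t : ℝ) - 4) * Δ) + Δ ≤ ((t : ℝ) + 1 - 4) * Δ := by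
      rw [show (1 - 4 / (t : ℝ)) * (((t : ℝ) - 4) * Δ) = ((t : ℝ) - 4) ^ 2 / (t : ℝ) * Δ by field_simp]
      have : ((t : ℝ) - 4) ^ 2 / (t : ℝ) ≤ (t : ℝ) - 4 := by
        rw [div_le_iff₀ hTpos]; nlinarith
      nlinarith
    push_cast
    calc e (t + 1) ≤ (1 - 4 / (t : ℝ)) * e t + k₁ / (t : ℝ) ^ 2 + k₂ / (t : ℝ) ^ 4 + Δ := key
      _ ≤ (1 - 4 / (t : ℝ)) * (((t₀ : ℝ) / (t : ℝ)) * e t₀ + k₁ / (t : ℝ) + k₂ / (t : ℝ) ^ 3 + ((t : ℝ) - 4) * Δ)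
            + k₁ / (t : ℝ) ^ 2 + k₂ / (t : ℝ) ^ 4 + Δ := by linarith
      _ = (1 - 4 / (t : ℝ)) * (((t₀ : ℝ) / (t : ℝ)) * e t₀)
            + ((1 - 4 / (t : ℝ)) * (k₁ / (t : ℝ)) + k₁ / (t : ℝ) ^ 2)
            + ((1 - 4 / (t : ℝ)) * (k₂ / (t : ℝ) ^ 3) + k₂ / (t : ℝ) ^ 4)
            + ((1 - 4 / (t : ℝ)) * (((t : ℝ) - 4) * Δ) + Δ) := by ring
      _ ≤ (t₀ : ℝ) / ((t : ℝ) + 1) * e t₀ + k₁ / ((t : ℝ) + 1) + k₂ / ((t : ℝ) + 1) ^ 3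
            + ((t : ℝ) + 1 - 4) * Δ := by linarith
end
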